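/- Let ε = exp(2πi/91). The subgroup of SU(3) generated by E and diag(ε, ε⁹, ε^{−10}) and the subgroup of SU(3) generated by E and diag(ε, ε^{16}, ε^{−17}) (i.e. the groups C_{91,1}^{(9)} and C_{91,1}^{(16)}, both of order 273) are not isomorphic as groups. -/

import Mathlib

/-!
Both groups are semidirect products `ℤ/91 ⋊ ℤ/3`: `E` acts on the cyclic group `⟨F⟩` by
`F ↦ F ^ k`, and every element is uniquely `F ^ a * E ^ i` with `a < 91`, `i < 3`, whence the
order 273. An element `F ^ a * E ^ i` with `i ≠ 0` cubes to `F ^ (a (1 + k^i + k^(2i))) = 1`, so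
the elements of order 91 are powers of `F`, and conjugation acts on them by a power `k ^ j`.
In `C^(9)` conjugation by `E` raises `F` (of order 91) to the 9th power; an isomorphism would
transport this into `C^(16)`, forcing `9 ≡ 16 ^ j (mod 91)` for some `j < 3`, but
`16 ^ j ≡ 1, 16, 74`.
-/

open Matrix Complex

noncomputable section

/-- The group `SU(3)`: 3×3 complex unitary matrices of determinant 1. -/
abbrev SU3 : Type := ↥(Matrix.specialUnitaryGroup (Fin 3) ℂ)

noncomputable instance : Group SU3 :=
  { (inferInstance : Monoid SU3) with
    inv := fun A => ⟨star A.val,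
      ⟨Unitary.star_mem A.2.1, by
        have h2 : A.val.det = 1 := A.2.2
        show Matrix.detMonoidHom (star A.val) = 1
        show (star A.val).det = 1
        rw [Matrix.star_eq_conjTranspose, Matrix.det_conjTranspose, h2, star_one]⟩⟩
    inv_mul_cancel := fun A => Subtype.ext A.2.1.1 }

/-- The matrix `E` with rows (0,1,0), (0,0,1), (1,0,0). -/
def EM : Matrix (Fin 3) (Fin 3) ℂ := !![0, 1, 0; 0, 0, 1; 1, 0, 0]

/-- The matrix `B` with rows (-1,0,0), (0,0,-1), (0,-1,0). -/
def BM : Matrix (Fin 3) (Fin 3) ℂ := !![-1, 0, 0; 0, 0, -1; 0, -1, 0]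

/-- `ε = exp(2πi/m)`. -/
def eps (m : ℕ) : ℂ := Complex.exp (2 * Real.pi * Complex.I / m)

/-- The diagonal matrix `F = diag(ε, ε^k, ε^(-k-1))` with `ε = exp(2πi/m)`. -/
def FM (m : ℕ) (k : ℤ) : Matrix (Fin 3) (Fin 3) ℂ :=
  Matrix.diagonal ![eps m, eps m ^ k, eps m ^ (-k - 1)]

/-- The diagonal matrix `G = diag(1, ε^(-r), ε^r)` with `ε = exp(2πi/m)`. -/
def GM (m r : ℕ) : Matrix (Fin 3) (Fin 3) ℂ :=
  Matrix.diagonal ![1, eps m ^ (-(r : ℤ)), eps m ^ (r : ℤ)]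


section TypeC

variable {G : Type*} [Group G]

/-- `f` and `e` play the roles of the generators `F` and `E` of the group `C_{m,1}^{(k)}`:
they satisfy its defining relations, and the only relations among the words `f ^ a * e ^ i`
are the obvious ones. -/
structure IsTypeC (f e : G) (m k : ℕ) : Prop where
  pow_left : f ^ m = 1
  pow_right : e ^ 3 = 1
  mul_eq_pow_mul : e * f = f ^ k * e
  dvd_of_pow_mul_pow_eq_one : ∀ a i : ℕ, f ^ a * e ^ i = 1 → m ∣ a ∧ 3 ∣ i

theorem pow_mul_pow_eq_pow_mul_pow {f e : G} {k : ℕ} (h : e * f = f ^ k * e) (i b : ℕ) :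
    e ^ i * f ^ b = f ^ (k ^ i * b) * e ^ i := by
  have hb (b : ℕ) : e * f ^ b = f ^ (k * b) * e := by
    rw [pow_mul]; exact (SemiconjBy.pow_right h b).eq
  induction i with
  | zero => simp
  | succ i ih =>
    rw [pow_succ', mul_assoc, ih, ← mul_assoc, hb, mul_assoc, pow_succ' k, Nat.mul_assoc]

namespace IsTypeC

variable {f e : G} {m k : ℕ}

theorem pow_mul_pow_mul_pow_mul_pow (h : IsTypeC f e m k) (a i b j : ℕ) :
    f ^ a * e ^ i * (f ^ b * e ^ j) = f ^ (a + k ^ i * b) * e ^ (i + j) := by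
  rw [mul_assoc, ← mul_assoc (e ^ i), pow_mul_pow_eq_pow_mul_pow h.mul_eq_pow_mul, pow_add,
    pow_add]
  group

theorem orderOf_left (h : IsTypeC f e m k) : orderOf f = m :=
  Nat.dvd_antisymm (orderOf_dvd_of_pow_eq_one h.pow_left)
    (h.dvd_of_pow_mul_pow_eq_one _ 0 (by rw [pow_orderOf_eq_one, one_mul, pow_zero])).1

theorem exists_pow_mul_pow_eq_of_mem_closure (h : IsTypeC f e m k) (hm : 0 < m) {g : G}
    (hg : g ∈ Subgroup.closure {e, f}) : ∃ a < m, ∃ i < 3, f ^ a * e ^ i = g := by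
  suffices ∃ a i : ℕ, f ^ a * e ^ i = g by
    obtain ⟨a, i, rfl⟩ := this
    exact ⟨a % m, Nat.mod_lt a hm, i % 3, Nat.mod_lt i three_pos,
      by rw [← pow_eq_pow_mod a h.pow_left, ← pow_eq_pow_mod i h.pow_right]⟩
  induction hg using Subgroup.closure_induction'' with
  | mem x hx =>
    rcases hx with rfl | rfl
    · exact ⟨0, 1, by simp⟩
    · exact ⟨1, 0, by simp⟩
  | inv_mem x hx =>
    rcases hx with rfl | rfl
    · refine ⟨0, 2, ?_⟩
      rw [pow_zero, one_mul, eq_inv_iff_mul_eq_one, ← pow_succ, h.pow_right]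
    · refine ⟨m - 1, 0, ?_⟩
      rw [pow_zero, mul_one, eq_inv_iff_mul_eq_one, ← pow_succ, Nat.sub_add_cancel hm,
        h.pow_left]
  | one => exact ⟨0, 0, by simp⟩
  | mul x y _ _ hx hy =>
    obtain ⟨a, i, rfl⟩ := hx
    obtain ⟨b, j, rfl⟩ := hy
    exact ⟨_, _, (h.pow_mul_pow_mul_pow_mul_pow a i b j).symm⟩

theorem coe_closure_eq_image (h : IsTypeC f e m k) (hm : 0 < m) :
    (Subgroup.closure {e, f} : Set G) =
      (fun p : ℕ × ℕ => f ^ p.1 * e ^ p.2) ''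
        (Finset.range m ×ˢ Finset.range 3 : Finset _) := by
  ext g
  constructor
  · intro hg
    obtain ⟨a, ha, i, hi, rfl⟩ := h.exists_pow_mul_pow_eq_of_mem_closure hm hg
    exact ⟨(a, i), by simp [ha, hi], rfl⟩
  · rintro ⟨⟨a, i⟩, -, rfl⟩
    have hf : f ∈ Subgroup.closure {e, f} := Subgroup.subset_closure (by simp)
    have he : e ∈ Subgroup.closure {e, f} := Subgroup.subset_closure (by simp)
    exact mul_mem (pow_mem hf a) (pow_mem he i)

theorem injOn_pow_mul_pow (h : IsTypeC f e m k) :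
    Set.InjOn (fun p : ℕ × ℕ => f ^ p.1 * e ^ p.2)
      (Finset.range m ×ˢ Finset.range 3 : Finset _) := by
  rintro ⟨a, i⟩ hai ⟨b, j⟩ hbj hab
  simp only [Finset.coe_product, Finset.coe_range, Set.mem_prod, Set.mem_Iio] at hai hbj hab
  have hone : f ^ (a + (m - b)) * e ^ (i + (3 - j)) = 1 := calc
    _ = f ^ (m - b) * (f ^ a * e ^ i) * e ^ (3 - j) := by
      rw [add_comm a, pow_add, pow_add]; group
    _ = f ^ (m - b + b) * e ^ (j + (3 - j)) := by
      rw [hab, pow_add, pow_add]; group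
    _ = 1 := by
      rw [Nat.sub_add_cancel hbj.1.le, Nat.add_sub_cancel' hbj.2.le, h.pow_left, h.pow_right,
        one_mul]
  obtain ⟨hdvd, h3⟩ := h.dvd_of_pow_mul_pow_eq_one _ _ hone
  have hm_eq : a + (m - b) = m := Nat.eq_of_dvd_of_lt_two_mul (by omega) hdvd (by omega)
  ext <;> omega

theorem card_closure (h : IsTypeC f e m k) (hm : 0 < m) :
    Nat.card (Subgroup.closure {e, f}) = m * 3 := by
  rw [← SetLike.coe_sort_coe, Nat.card_coe_set_eq, h.coe_closure_eq_image hm,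
    h.injOn_pow_mul_pow.ncard_image, Set.ncard_coe_finset, Finset.card_product,
    Finset.card_range, Finset.card_range]

theorem pow_mul_pow_pow (h : IsTypeC f e m k) (a i n : ℕ) :
    (f ^ a * e ^ i) ^ n = f ^ (a * ∑ t ∈ Finset.range n, k ^ (i * t)) * e ^ (i * n) := by
  induction n with
  | zero => simp
  | succ n ih =>
    rw [pow_succ, ih, h.pow_mul_pow_mul_pow_mul_pow, Finset.sum_range_succ]
    ring_nf

theorem pow_three_eq_one (h : IsTypeC f e m k) (hk : m ∣ k ^ 2 + k + 1) (a : ℕ) {i : ℕ}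
    (hi : i = 1 ∨ i = 2) : (f ^ a * e ^ i) ^ 3 = 1 := by
  have hsum : m ∣ ∑ t ∈ Finset.range 3, k ^ (i * t) := by
    rw [← ZMod.natCast_eq_zero_iff] at hk ⊢
    push_cast at hk ⊢
    simp only [Finset.sum_range_succ, Finset.sum_range_zero]
    rcases hi with rfl | rfl
    · linear_combination hk
    · linear_combination ((k : ZMod m) ^ 2 - k + 1) * hk
  obtain ⟨c, hc⟩ := hsum
  rw [h.pow_mul_pow_pow, hc, mul_left_comm, pow_mul f m, h.pow_left, one_pow, one_mul,
    mul_comm i, pow_mul e 3, h.pow_right, one_pow]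

theorem conj_pow_eq_pow (h : IsTypeC f e m k) (a b j : ℕ) :
    f ^ b * e ^ j * f ^ a * (f ^ b * e ^ j)⁻¹ = (f ^ a) ^ (k ^ j) := by
  apply mul_inv_eq_of_eq_mul
  rw [← pow_mul, mul_comm a, mul_assoc (f ^ b), pow_mul_pow_eq_pow_mul_pow h.mul_eq_pow_mul,
    ← mul_assoc, ← mul_assoc, ← pow_add, ← pow_add, add_comm]

theorem exists_pow_modEq_of_conj (h : IsTypeC f e m k) (hm : 3 < m) (hk : m ∣ k ^ 2 + k + 1)
    {x y : G} (hx : x ∈ Subgroup.closure {e, f}) (hy : y ∈ Subgroup.closure {e, f})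
    (hxm : orderOf x = m) {l : ℕ} (hl : y * x * y⁻¹ = x ^ l) :
    ∃ j < 3, k ^ j ≡ l [MOD m] := by
  obtain ⟨a, -, i, hi, rfl⟩ := h.exists_pow_mul_pow_eq_of_mem_closure (by omega) hx
  obtain ⟨b, -, j, hj, rfl⟩ := h.exists_pow_mul_pow_eq_of_mem_closure (by omega) hy
  obtain rfl : i = 0 := by
    by_contra hi0
    have hdvd := orderOf_dvd_of_pow_eq_one (h.pow_three_eq_one hk a (i := i) (by omega))
    have hle := Nat.le_of_dvd three_pos (hxm ▸ hdvd)
    omega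
  rw [pow_zero, mul_one] at hxm hl
  refine ⟨j, hj, ?_⟩
  rw [← hxm, ← pow_eq_pow_iff_modEq, ← h.conj_pow_eq_pow a b j, hl]

theorem isEmpty_mulEquiv {H : Type*} [Group H] {f' e' : H} {k' : ℕ} (h : IsTypeC f e m k)
    (h' : IsTypeC f' e' m k') (hm : 3 < m) (hk' : m ∣ k' ^ 2 + k' + 1)
    (hkk' : ∀ j < 3, ¬ k' ^ j ≡ k [MOD m]) :
    IsEmpty (Subgroup.closure {e, f} ≃* Subgroup.closure {e', f'}) := by
  refine ⟨fun φ => ?_⟩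
  let x : Subgroup.closure {e, f} := ⟨f, Subgroup.subset_closure (by simp)⟩
  let y : Subgroup.closure {e, f} := ⟨e, Subgroup.subset_closure (by simp)⟩
  have hx : orderOf (φ x : H) = m := by
    rw [Subgroup.orderOf_coe, MulEquiv.orderOf_eq, Subgroup.orderOf_mk, h.orderOf_left]
  have hconj : y * x * y⁻¹ = x ^ k := Subtype.ext (mul_inv_eq_of_eq_mul h.mul_eq_pow_mul)
  have hl : (φ y : H) * φ x * (φ y)⁻¹ = (φ x : H) ^ k := by
    rw [← Subgroup.coe_mul, ← Subgroup.coe_mul, ← Subgroup.coe_pow,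
      ← map_inv, ← map_mul, ← map_mul, ← map_pow, hconj]
  obtain ⟨j, hj, hmod⟩ := h'.exists_pow_modEq_of_conj hm hk' (φ x).2 (φ y).2 hx hl
  exact hkk' j hj hmod

end IsTypeC

end TypeC

theorem EM_pow_three : EM ^ 3 = 1 := by
  ext i j
  fin_cases i <;> fin_cases j <;> simp [EM, pow_succ, Matrix.mul_apply, Fin.sum_univ_three]

theorem EM_mul_diagonal (a b c : ℂ) : EM * diagonal ![a, b, c] = diagonal ![b, c, a] * EM := by
  ext i j; fin_cases i <;> fin_cases j <;> simp [EM]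

theorem EM_pow_apply_zero_zero (i : ℕ) : (EM ^ i) 0 0 = if 3 ∣ i then 1 else 0 := by
  rw [pow_eq_pow_mod i EM_pow_three]
  have := Nat.mod_lt i three_pos
  interval_cases h : i % 3 <;>
    simp [Nat.dvd_iff_mod_eq_zero, h, EM, pow_succ, Matrix.mul_apply, Fin.sum_univ_three]

section FM

variable {m : ℕ}

theorem eps_isPrimitiveRoot (hm : m ≠ 0) : IsPrimitiveRoot (eps m) m :=
  Complex.isPrimitiveRoot_exp m hm

theorem eps_zpow_eq_zpow (hm : m ≠ 0) {s t : ℤ} (h : (m : ℤ) ∣ s - t) :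
    eps m ^ s = eps m ^ t := by
  have h0 : eps m ≠ 0 := Complex.exp_ne_zero _
  rw [← sub_add_cancel s t, zpow_add₀ h0,
    ((eps_isPrimitiveRoot hm).zpow_eq_one_iff_dvd _).2 h, one_mul]

theorem eps_zpow_mul_self (hm : m ≠ 0) (z : ℤ) : eps m ^ (z * m) = 1 := by
  rw [mul_comm, _root_.zpow_mul, zpow_natCast, (eps_isPrimitiveRoot hm).pow_eq_one,
    _root_.one_zpow]

theorem FM_pow_self (hm : m ≠ 0) (k : ℤ) : FM m k ^ m = 1 := by
  rw [FM, diagonal_pow, ← diagonal_one]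
  congr 1
  ext i
  fin_cases i
  · simp [(eps_isPrimitiveRoot hm).pow_eq_one]
  all_goals simp [← zpow_natCast, ← _root_.zpow_mul, eps_zpow_mul_self hm]

theorem EM_mul_FM {k : ℕ} (hm : m ≠ 0) (hk : m ∣ k ^ 2 + k + 1) :
    EM * FM m k = FM m k ^ k * EM := by
  rw [FM, EM_mul_diagonal, diagonal_pow]
  have hk' : (m : ℤ) ∣ k ^ 2 + k + 1 := by exact_mod_cast hk
  congr 2
  ext i
  fin_cases i <;> simp [← zpow_natCast, ← _root_.zpow_mul]
  · apply eps_zpow_eq_zpow hm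
    rw [show -(k : ℤ) - 1 - k * k = -(k ^ 2 + k + 1) by ring, dvd_neg]
    exact hk'
  · rw [eps_zpow_eq_zpow hm (t := 1), zpow_one]
    rw [show (-(k : ℤ) - 1) * k - 1 = -(k ^ 2 + k + 1) by ring, dvd_neg]
    exact hk'

theorem FM_pow_mul_EM_pow_eq_one (hm : m ≠ 0) (k : ℤ) {a i : ℕ}
    (h : FM m k ^ a * EM ^ i = 1) : m ∣ a ∧ 3 ∣ i := by
  have h00 := congr_fun₂ h 0 0
  rw [FM, diagonal_pow, diagonal_mul, EM_pow_apply_zero_zero, one_apply_eq] at h00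
  split_ifs at h00 with h3
  · refine ⟨((eps_isPrimitiveRoot hm).pow_eq_one_iff_dvd a).1 ?_, h3⟩
    simpa using h00
  · simp at h00

end FM

theorem isTypeC_of_coe_eq {m k : ℕ} {E F : SU3} (hm : m ≠ 0) (hk : m ∣ k ^ 2 + k + 1)
    (hE : (E : Matrix (Fin 3) (Fin 3) ℂ) = EM) (hF : (F : Matrix (Fin 3) (Fin 3) ℂ) = FM m k) :
    IsTypeC F E m k where
  pow_left := Subtype.ext (by rw [SubmonoidClass.coe_pow, hF, FM_pow_self hm]; rfl)
  pow_right := Subtype.ext (by rw [SubmonoidClass.coe_pow, hE, EM_pow_three]; rfl)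
  mul_eq_pow_mul := Subtype.ext (by simp [hE, hF, EM_mul_FM hm hk])
  dvd_of_pow_mul_pow_eq_one a i hai :=
    FM_pow_mul_EM_pow_eq_one hm k (by simpa [hE, hF] using congrArg Subtype.val hai)

theorem statement19 (E F₉ F₁₆ : SU3)
    (hE : (E : Matrix (Fin 3) (Fin 3) ℂ) = EM)
    (hF₉ : (F₉ : Matrix (Fin 3) (Fin 3) ℂ) = Matrix.diagonal ![eps 91, eps 91 ^ (9 : ℤ), eps 91 ^ (-10 : ℤ)])
    (hF₁₆ : (F₁₆ : Matrix (Fin 3) (Fin 3) ℂ) = Matrix.diagonal ![eps 91, eps 91 ^ (16 : ℤ), eps 91 ^ (-17 : ℤ)]) :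
    Nat.card (Subgroup.closure ({E, F₉} : Set SU3)) = 273 ∧
    Nat.card (Subgroup.closure ({E, F₁₆} : Set SU3)) = 273 ∧
    IsEmpty ((Subgroup.closure ({E, F₉} : Set SU3)) ≃*
      (Subgroup.closure ({E, F₁₆} : Set SU3))) := by
  have h₉ : IsTypeC F₉ E 91 9 :=
    isTypeC_of_coe_eq (by norm_num) (by norm_num) hE (by rw [hF₉, FM]; norm_num)
  have h₁₆ : IsTypeC F₁₆ E 91 16 :=
    isTypeC_of_coe_eq (by norm_num) (by norm_num) hE (by rw [hF₁₆, FM]; norm_num)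
  exact ⟨h₉.card_closure (by norm_num), h₁₆.card_closure (by norm_num),
    h₉.isEmpty_mulEquiv h₁₆ (by norm_num) (by norm_num) (by decide)⟩

end
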